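/- For every real q > 1 and every j ∈ ℤ, the family (⌈j⌉ / (⌈i⌉·⌈j−i⌉))^q, i ∈ ℤ, is summable and ∑_{i∈ℤ} (⌈j⌉ / (⌈i⌉·⌈j−i⌉))^q ≤ 4 + 2(q+1)/(q−1). -/
import Mathlib


open scoped BigOperators

/-- `⌈j⌉ := max(|j|,2)` as a real number. -/
noncomputable def jml (j : ℤ) : ℝ := max (|(j : ℝ)|) 2

open Real Filter Finset Topology

lemma two_le_jml (i : ℤ) : 2 ≤ jml i := le_max_right _ _

lemma jml_pos (i : ℤ) : 0 < jml i := lt_of_lt_of_le two_pos (two_le_jml i)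

lemma abs_le_jml (i : ℤ) : |(i : ℝ)| ≤ jml i := le_max_left _ _

lemma jml_neg (i : ℤ) : jml (-i) = jml i := by simp [jml]

lemma jml_natCast (n : ℕ) : jml (n : ℤ) = max (n : ℝ) 2 := by
  simp [jml, abs_of_nonneg (by positivity : (0:ℝ) ≤ (n:ℝ))]

lemma jml_natCast_of_le {n : ℕ} (h : 2 ≤ n) : jml (n : ℤ) = n := by
  rw [jml_natCast]
  exact max_eq_left (by exact_mod_cast h)

lemma jml_le_add (j i : ℤ) : jml j ≤ jml i + jml (j - i) := by
  have h1 : |(j : ℝ)| ≤ jml i + jml (j - i) := by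
    have hj : (j : ℝ) = (i : ℝ) + ((j - i : ℤ) : ℝ) := by push_cast; ring
    calc |(j : ℝ)| = |(i : ℝ) + ((j - i : ℤ) : ℝ)| := by rw [← hj]
      _ ≤ |(i : ℝ)| + |((j - i : ℤ) : ℝ)| := abs_add_le _ _
      _ ≤ jml i + jml (j - i) := add_le_add (abs_le_jml i) (abs_le_jml (j - i))
  exact max_le h1 (by linarith [two_le_jml i, two_le_jml (j - i)])

lemma ratio_le (j i : ℤ) :
    jml j / (jml i * jml (j - i)) ≤ 1 / jml i + 1 / jml (j - i) := by
  have hi := jml_pos i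
  have hji := jml_pos (j - i)
  have hP : (0:ℝ) < jml i * jml (j - i) := mul_pos hi hji
  have key : jml j / (jml i * jml (j - i)) ≤ (jml i + jml (j - i)) / (jml i * jml (j - i)) :=
    (div_le_div_iff_of_pos_right hP).2 (jml_le_add j i)

  have heq : (jml i + jml (j - i)) / (jml i * jml (j - i)) = 1 / jml i + 1 / jml (j - i) := by
    field_simp
    ring
  linarith [key, heq.le, heq.ge]

/-- Real version of the two-point power-mean inequality. -/
lemma real_add_rpow_le {a b p : ℝ} (ha : 0 ≤ a) (hb : 0 ≤ b) (hp : 1 ≤ p) :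
    (a + b) ^ p ≤ 2 ^ (p - 1) * (a ^ p + b ^ p) := by
  have h := NNReal.rpow_add_le_mul_rpow_add_rpow a.toNNReal b.toNNReal hp
  rw [← NNReal.coe_le_coe] at h
  push_cast at h
  rwa [Real.coe_toNNReal a ha, Real.coe_toNNReal b hb] at h

/-- Bernoulli-based step inequality for the telescoping bound. -/
lemma rpow_step (q : ℝ) (hq : 1 < q) (a : ℝ) (ha : 2 ≤ a) :
    (q - 1) * (a + 1) ^ (-q) ≤ a ^ (1 - q) - (a + 1) ^ (1 - q) := by
  have ha0 : (0:ℝ) < a := by linarith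
  have hb0 : (0:ℝ) < a + 1 := by linarith
  have hbq : (0:ℝ) < (a + 1) ^ q := Real.rpow_pos_of_pos hb0 q
  -- Bernoulli
  have hber : 1 + q * (1 / a) ≤ (1 + 1 / a) ^ q := by
    have h0 : (0:ℝ) ≤ 1 / a := by positivity
    exact one_add_mul_self_le_rpow_one_add (by linarith) hq.le
  have h1 : (1:ℝ) + 1 / a = (a + 1) / a := by field_simp
  have h2 : a + q ≤ a * ((a + 1) / a) ^ q := by
    have := mul_le_mul_of_nonneg_left hber ha0.le
    calc a + q = a * (1 + q * (1 / a)) := by field_simp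
      _ ≤ a * (1 + 1 / a) ^ q := this
      _ = a * ((a + 1) / a) ^ q := by rw [h1]
  have h3 : a * ((a + 1) / a) ^ q = a ^ (1 - q) * (a + 1) ^ q := by
    rw [Real.div_rpow hb0.le ha0.le, Real.rpow_sub ha0, Real.rpow_one]
    have haq : (0:ℝ) < a ^ q := Real.rpow_pos_of_pos ha0 q
    field_simp
  rw [Real.rpow_neg hb0.le, ← div_eq_mul_inv, div_le_iff₀ hbq]
  have hsplit : (a ^ (1 - q) - (a + 1) ^ (1 - q)) * (a + 1) ^ q
      = a ^ (1 - q) * (a + 1) ^ q - (a + 1) := by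
    rw [sub_mul, ← Real.rpow_add hb0]
    norm_num
  rw [hsplit]
  have h4 : a + q ≤ a ^ (1 - q) * (a + 1) ^ q := h3 ▸ h2
  linarith

/-- Tail bound: `∑_{n≥0} (1/(n+3))^q ≤ 2^(1-q)/(q-1)`. -/
lemma tail_summable_and_le (q : ℝ) (hq : 1 < q) :
    Summable (fun n : ℕ => (1 / ((n : ℝ) + 3)) ^ q) ∧
      (∑' n : ℕ, (1 / ((n : ℝ) + 3)) ^ q) ≤ (1 / (q - 1)) * 2 ^ (1 - q) := by
  set g : ℕ → ℝ := fun n => ((n : ℝ) + 2) ^ (1 - q) with hg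
  have hq1 : (0:ℝ) < q - 1 := by linarith
  have hterm : ∀ n : ℕ, (1 / ((n : ℝ) + 3)) ^ q = ((n : ℝ) + 3) ^ (-q) := by
    intro n
    rw [one_div, Real.inv_rpow (by positivity), ← Real.rpow_neg (by positivity)]
  have hstep : ∀ n : ℕ, (q - 1) * ((n : ℝ) + 3) ^ (-q) ≤ g n - g (n + 1) := by
    intro n
    have := rpow_step q hq ((n : ℝ) + 2) (by norm_num)
    have e1 : ((n : ℝ) + 2) + 1 = ((n : ℝ) + 3) := by ring
    have e2 : g (n + 1) = ((n : ℝ) + 3) ^ (1 - q) := by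
      simp only [hg]
      push_cast
      ring_nf
    rw [e2]
    simpa [e1, hg] using this
  have hnn : ∀ n : ℕ, (0:ℝ) ≤ g n - g (n + 1) := by
    intro n
    refine le_trans ?_ (hstep n)
    positivity
  have hgt : Tendsto g atTop (𝓝 0) := by
    have h1 : Tendsto (fun n : ℕ => ((n : ℝ) + 2)) atTop atTop :=
      tendsto_atTop_add_const_right _ 2 tendsto_natCast_atTop_atTop
    have h2 := (tendsto_rpow_neg_atTop hq1).comp h1
    have hge : g = (fun x : ℝ => x ^ (-(q - 1))) ∘ fun n : ℕ => ((n : ℝ) + 2) := by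
      funext n
      simp only [hg, Function.comp_apply]
      congr 1
      ring
    rw [hge]
    exact h2
  have htendsto : Tendsto (fun n => ∑ i ∈ Finset.range n, (g i - g (i + 1))) atTop (𝓝 (g 0)) := by
    have hsum : ∀ n, ∑ i ∈ Finset.range n, (g i - g (i + 1)) = g 0 - g n :=
      fun n => Finset.sum_range_sub' g n
    simp only [hsum]
    simpa using tendsto_const_nhds.sub hgt
  have htel : HasSum (fun n => g n - g (n + 1)) (g 0) :=
    (hasSum_iff_tendsto_nat_of_nonneg hnn _).2 htendsto
  have hcomp : ∀ n : ℕ, (1 / ((n : ℝ) + 3)) ^ q ≤ (1 / (q - 1)) * (g n - g (n + 1)) := by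
    intro n
    rw [hterm n]
    have h := hstep n
    calc ((n : ℝ) + 3) ^ (-q) = (1 / (q - 1)) * ((q - 1) * ((n : ℝ) + 3) ^ (-q)) := by
          field_simp
      _ ≤ (1 / (q - 1)) * (g n - g (n + 1)) := by
          apply mul_le_mul_of_nonneg_left h
          positivity
  have hrs : Summable (fun n : ℕ => (1 / (q - 1)) * (g n - g (n + 1))) :=
    htel.summable.mul_left _
  have hsummable : Summable (fun n : ℕ => (1 / ((n : ℝ) + 3)) ^ q) :=
    Summable.of_nonneg_of_le (fun n => by positivity) hcomp hrs
  refine ⟨hsummable, ?_⟩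
  have hle := Summable.tsum_le_tsum hcomp hsummable hrs
  have hrsum : (∑' n : ℕ, (1 / (q - 1)) * (g n - g (n + 1))) = (1 / (q - 1)) * g 0 :=
    (htel.mul_left _).tsum_eq
  have hg0 : g 0 = 2 ^ (1 - q) := by simp [hg]
  rw [hrsum, hg0] at hle
  exact hle

/-- Summability and bound for the full `ℤ`-indexed series `(1/⌈i⌉)^q`. -/
lemma a_summable_and_le (q : ℝ) (hq : 1 < q) :
    Summable (fun i : ℤ => (1 / jml i) ^ q) ∧
      (∑' i : ℤ, (1 / jml i) ^ q) ≤ 5 * (1 / 2) ^ q + 2 * ((1 / (q - 1)) * 2 ^ (1 - q)) := by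
  obtain ⟨htail, htail_le⟩ := tail_summable_and_le q hq
  have hq1 : (0:ℝ) < q - 1 := by linarith
  -- nat side
  have hnat3 : (fun n : ℕ => (1 / jml ((n : ℤ) + 3)) ^ q) = fun n : ℕ => (1 / ((n : ℝ) + 3)) ^ q := by
    funext n
    have : ((n : ℤ) + 3) = ((n + 3 : ℕ) : ℤ) := by push_cast; ring
    rw [this, jml_natCast_of_le (by omega)]
    push_cast
    ring_nf
  have hnat : Summable (fun n : ℕ => (1 / jml (n : ℤ)) ^ q) := by
    apply (summable_nat_add_iff 3).mp
    have : (fun n : ℕ => (1 / jml ((n + 3 : ℕ) : ℤ)) ^ q) = fun n : ℕ => (1 / ((n : ℝ) + 3)) ^ q := by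
      funext n
      have h3 : ((n + 3 : ℕ) : ℤ) = (n : ℤ) + 3 := by push_cast; ring
      rw [h3]
      exact congrFun hnat3 n
    rw [this]
    exact htail
  -- neg side
  have hnegeq : (fun n : ℕ => (1 / jml (-((n : ℤ) + 1))) ^ q) =
      fun n : ℕ => (1 / jml ((n : ℤ) + 1)) ^ q := by
    funext n; rw [jml_neg]
  have hneg2 : (fun n : ℕ => (1 / jml (((n + 2 : ℕ) : ℤ) + 1)) ^ q) =
      fun n : ℕ => (1 / ((n : ℝ) + 3)) ^ q := by
    funext n
    have : (((n + 2 : ℕ) : ℤ) + 1) = ((n + 3 : ℕ) : ℤ) := by push_cast; ring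
    rw [this, jml_natCast_of_le (by omega)]
    push_cast
    ring_nf
  have hneg : Summable (fun n : ℕ => (1 / jml (-((n : ℤ) + 1))) ^ q) := by
    rw [hnegeq]
    apply (summable_nat_add_iff 2).mp
    rw [show (fun n : ℕ => (1 / jml (((n + 2 : ℕ) : ℤ) + 1)) ^ q) =
        fun n : ℕ => (1 / ((n : ℝ) + 3)) ^ q from hneg2]
    exact htail
  have hsummable : Summable (fun i : ℤ => (1 / jml i) ^ q) :=
    Summable.of_nat_of_neg_add_one hnat hneg
  refine ⟨hsummable, ?_⟩
  -- tsum over ℤ splits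
  have hsplit : (∑' i : ℤ, (1 / jml i) ^ q) =
      (∑' n : ℕ, (1 / jml (n : ℤ)) ^ q) + ∑' n : ℕ, (1 / jml (-((n : ℤ) + 1))) ^ q :=
    tsum_of_nat_of_neg_add_one hnat hneg
  -- nat side bound
  have hnat_le : (∑' n : ℕ, (1 / jml (n : ℤ)) ^ q) ≤ 3 * (1 / 2) ^ q + (1 / (q - 1)) * 2 ^ (1 - q) := by
    have hdecomp := Summable.sum_add_tsum_nat_add 3 hnat
    have hshift : (∑' n : ℕ, (1 / jml ((n + 3 : ℕ) : ℤ)) ^ q) = ∑' n : ℕ, (1 / ((n : ℝ) + 3)) ^ q := by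
      refine tsum_congr fun n => ?_
      have h3 : ((n + 3 : ℕ) : ℤ) = (n : ℤ) + 3 := by push_cast; ring
      rw [h3]
      exact congrFun hnat3 n
    have hfirst : (∑ n ∈ Finset.range 3, (1 / jml (n : ℤ)) ^ q) = 3 * (1 / 2) ^ q := by
      rw [Finset.sum_range_succ, Finset.sum_range_succ, Finset.sum_range_one]
      have h0 : jml ((0 : ℕ) : ℤ) = 2 := by norm_num [jml]
      have h1 : jml ((1 : ℕ) : ℤ) = 2 := by norm_num [jml]
      have h2 : jml ((2 : ℕ) : ℤ) = 2 := by norm_num [jml]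
      rw [h0, h1, h2]
      ring
    calc (∑' n : ℕ, (1 / jml (n : ℤ)) ^ q)
        = (∑ n ∈ Finset.range 3, (1 / jml (n : ℤ)) ^ q) + ∑' n : ℕ, (1 / jml ((n + 3 : ℕ) : ℤ)) ^ q := by
          rw [← hdecomp]
      _ = 3 * (1 / 2) ^ q + ∑' n : ℕ, (1 / ((n : ℝ) + 3)) ^ q := by rw [hfirst, hshift]
      _ ≤ 3 * (1 / 2) ^ q + (1 / (q - 1)) * 2 ^ (1 - q) := by linarith
  -- neg side bound
  have hneg_le : (∑' n : ℕ, (1 / jml (-((n : ℤ) + 1))) ^ q) ≤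
      2 * (1 / 2) ^ q + (1 / (q - 1)) * 2 ^ (1 - q) := by
    rw [show (fun n : ℕ => (1 / jml (-((n : ℤ) + 1))) ^ q) =
        fun n : ℕ => (1 / jml ((n : ℤ) + 1)) ^ q from hnegeq]
    have hsum' : Summable (fun n : ℕ => (1 / jml ((n : ℤ) + 1)) ^ q) := by
      rwa [hnegeq] at hneg
    have hdecomp := Summable.sum_add_tsum_nat_add 2 hsum'
    have hshift : (∑' n : ℕ, (1 / jml (((n + 2 : ℕ) : ℤ) + 1)) ^ q)
        = ∑' n : ℕ, (1 / ((n : ℝ) + 3)) ^ q :=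
      tsum_congr fun n => congrFun hneg2 n
    have hfirst : (∑ n ∈ Finset.range 2, (1 / jml ((n : ℤ) + 1)) ^ q) = 2 * (1 / 2) ^ q := by
      rw [Finset.sum_range_succ, Finset.sum_range_one]
      have h1 : jml (((0 : ℕ) : ℤ) + 1) = 2 := by norm_num [jml]
      have h2 : jml (((1 : ℕ) : ℤ) + 1) = 2 := by norm_num [jml]
      rw [h1, h2]
      ring
    calc (∑' n : ℕ, (1 / jml ((n : ℤ) + 1)) ^ q)
        = (∑ n ∈ Finset.range 2, (1 / jml ((n : ℤ) + 1)) ^ q)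
            + ∑' n : ℕ, (1 / jml (((n + 2 : ℕ) : ℤ) + 1)) ^ q := by
          rw [← hdecomp]
      _ = 2 * (1 / 2) ^ q + ∑' n : ℕ, (1 / ((n : ℝ) + 3)) ^ q := by rw [hfirst, hshift]
      _ ≤ 2 * (1 / 2) ^ q + (1 / (q - 1)) * 2 ^ (1 - q) := by linarith
  rw [hsplit]
  linarith

/-- For every real `q > 1` and every `j ∈ ℤ`, the family
`(⌈j⌉/(⌈i⌉·⌈j−i⌉))^q` is summable in `i`, with sum at most `4 + 2(q+1)/(q−1)`. -/
theorem sum_jml_ratio_rpow_le (q : ℝ) (hq : 1 < q) (j : ℤ) :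
    (Summable fun i : ℤ => (jml j / (jml i * jml (j - i))) ^ q) ∧
    (∑' i : ℤ, (jml j / (jml i * jml (j - i))) ^ q) ≤ 4 + 2 * (q + 1) / (q - 1) := by
  obtain ⟨hsa, hta⟩ := a_summable_and_le q hq
  have hq1 : (0:ℝ) < q - 1 := by linarith
  set a : ℤ → ℝ := fun i => (1 / jml i) ^ q with ha
  set b : ℤ → ℝ := fun i => (1 / jml (j - i)) ^ q with hb
  -- b is a reindexing of a
  have hbeq : b = (fun i : ℤ => a i) ∘ (Equiv.subLeft j) := by
    funext i
    simp [ha, hb, Equiv.subLeft]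
  have hsb : Summable b := by
    rw [hbeq]
    exact ((Equiv.subLeft j).summable_iff).mpr hsa
  have htb : (∑' i : ℤ, b i) = ∑' i : ℤ, a i := by
    rw [hbeq]
    exact (Equiv.subLeft j).tsum_eq a
  -- pointwise bound
  have hpt : ∀ i : ℤ, (jml j / (jml i * jml (j - i))) ^ q ≤ 2 ^ (q - 1) * (a i + b i) := by
    intro i
    have hdnn : (0:ℝ) ≤ jml j / (jml i * jml (j - i)) :=
      div_nonneg (jml_pos j).le (mul_pos (jml_pos i) (jml_pos (j - i))).le
    have h1 : (jml j / (jml i * jml (j - i))) ^ q ≤ (1 / jml i + 1 / jml (j - i)) ^ q :=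
      Real.rpow_le_rpow hdnn (ratio_le j i) (by linarith)
    have h2 : (1 / jml i + 1 / jml (j - i)) ^ q ≤ 2 ^ (q - 1) * ((1 / jml i) ^ q + (1 / jml (j - i)) ^ q) :=
      real_add_rpow_le (one_div_nonneg.2 (jml_pos i).le) (one_div_nonneg.2 (jml_pos (j - i)).le) hq.le
    exact le_trans h1 h2
  have hG : Summable (fun i : ℤ => 2 ^ (q - 1) * (a i + b i)) := (hsa.add hsb).mul_left _
  have hsummable : Summable fun i : ℤ => (jml j / (jml i * jml (j - i))) ^ q :=
    Summable.of_nonneg_of_le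
      (fun i => Real.rpow_nonneg
        (div_nonneg (jml_pos j).le (mul_pos (jml_pos i) (jml_pos (j - i))).le) q) hpt hG
  refine ⟨hsummable, ?_⟩
  have hle := Summable.tsum_le_tsum hpt hsummable hG
  have hGsum : (∑' i : ℤ, 2 ^ (q - 1) * (a i + b i)) = 2 ^ (q - 1) * ((∑' i : ℤ, a i) + ∑' i : ℤ, b i) := by
    rw [tsum_mul_left, Summable.tsum_add hsa hsb]
  rw [hGsum, htb] at hle
  -- numeric wrap-up
  have h2q : (2:ℝ) ^ (q - 1) * (2 * (5 * (1 / 2) ^ q + 2 * ((1 / (q - 1)) * 2 ^ (1 - q))))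
      = 5 + 4 / (q - 1) := by
    have e1 : (1 / 2 : ℝ) ^ q = ((2:ℝ) ^ q)⁻¹ := by
      rw [one_div, Real.inv_rpow (by norm_num : (0:ℝ) ≤ 2), ← Real.rpow_neg (by norm_num : (0:ℝ) ≤ 2),
        Real.rpow_neg (by norm_num : (0:ℝ) ≤ 2)]
    have e3 : (2:ℝ) ^ (q - 1) * ((2:ℝ) ^ q)⁻¹ = (2:ℝ)⁻¹ := by
      rw [← Real.rpow_neg (by norm_num : (0:ℝ) ≤ 2), ← Real.rpow_add (by norm_num : (0:ℝ) < 2)]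
      have : q - 1 + -q = (-1:ℝ) := by ring
      rw [this, Real.rpow_neg_one]
    have e4 : (2:ℝ) ^ (q - 1) * (2:ℝ) ^ (1 - q) = 1 := by
      rw [← Real.rpow_add (by norm_num : (0:ℝ) < 2)]
      have : q - 1 + (1 - q) = (0:ℝ) := by ring
      rw [this, Real.rpow_zero]
    have expand : (2:ℝ) ^ (q - 1) * (2 * (5 * ((2:ℝ) ^ q)⁻¹ + 2 * ((1 / (q - 1)) * 2 ^ (1 - q))))
        = 10 * ((2:ℝ) ^ (q - 1) * ((2:ℝ) ^ q)⁻¹)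
          + (4 / (q - 1)) * ((2:ℝ) ^ (q - 1) * (2:ℝ) ^ (1 - q)) := by
      ring
    rw [e1, expand, e3, e4]
    norm_num
  have hfinal : (∑' i : ℤ, (jml j / (jml i * jml (j - i))) ^ q) ≤ 5 + 4 / (q - 1) := by
    have hmono : 2 ^ (q - 1) * ((∑' i : ℤ, a i) + ∑' i : ℤ, a i)
        ≤ 2 ^ (q - 1) * (2 * (5 * (1 / 2) ^ q + 2 * ((1 / (q - 1)) * 2 ^ (1 - q)))) := by
      have h2pos : (0:ℝ) < 2 ^ (q - 1) := Real.rpow_pos_of_pos (by norm_num) _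
      apply mul_le_mul_of_nonneg_left _ h2pos.le
      linarith
    calc (∑' i : ℤ, (jml j / (jml i * jml (j - i))) ^ q)
        ≤ 2 ^ (q - 1) * ((∑' i : ℤ, a i) + ∑' i : ℤ, a i) := hle
      _ ≤ 2 ^ (q - 1) * (2 * (5 * (1 / 2) ^ q + 2 * ((1 / (q - 1)) * 2 ^ (1 - q)))) := hmono
      _ = 5 + 4 / (q - 1) := h2q
  have htarget : 4 + 2 * (q + 1) / (q - 1) = 6 + 4 / (q - 1) := by
    field_simp
    ring
  rw [htarget]
  linarith
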